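/- Fix n ≥ 2 and i ∈ {1, ..., n+1}. Let S^i : ℝ^(n+1) → ℝ^n be the map deleting the i-th coordinate, and let T_n : ℝ^n → H_(n-1) be the projection along (1, ..., 1), i.e., T_n(y) = y - ((y_1 + ... + y_n)/n)·(1, ..., 1). Then the image of A_n under T_n ∘ S^i equals A*_(n-1), and likewise the image of A*_n under T_n ∘ S^i equals A*_(n-1). -/

import Mathlib

/-- The lattice `A_{m-1} = ℤ^m ∩ H_{m-1}`, indexed by the ambient dimension `m`. -/
def AlatAmb (m : ℕ) : Set (EuclideanSpace ℝ (Fin m)) :=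
  {x | (∀ k, ∃ z : ℤ, x k = (z : ℝ)) ∧ ∑ i, x i = 0}

/-- The permutohedral lattice `A*_{m-1}`, indexed by the ambient dimension `m`:
all points of the hyperplane `∑ x_i = 0` in `ℝ^m` with integer coordinate
differences. -/
def AstarAmb (m : ℕ) : Set (EuclideanSpace ℝ (Fin m)) :=
  {x | (∑ i, x i = 0) ∧ ∀ i j, ∃ z : ℤ, x i - x j = (z : ℝ)}

/-- `S^i : ℝ^(n+1) → ℝ^n`, deletion of the `i`-th coordinate. -/
def delCoord (n : ℕ) (i : Fin (n + 1)) (x : EuclideanSpace ℝ (Fin (n + 1))) :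
    EuclideanSpace ℝ (Fin n) :=
  WithLp.toLp 2 (fun k => x (i.succAbove k))

/-- `T_n : ℝ^n → H_{n-1}`, projection along `(1, …, 1)`. -/
noncomputable def projT (n : ℕ) (y : EuclideanSpace ℝ (Fin n)) :
    EuclideanSpace ℝ (Fin n) :=
  WithLp.toLp 2 (fun k => y k - (∑ l, y l) / (n : ℝ))

/-! Deleting a coordinate and then projecting along `(1, …, 1)` keeps all coordinate differences,
so `A*_n` (hence `A_n ⊆ A*_n`) lands in `A*_{n-1}`. Conversely, the coordinates of `w ∈ A*_{n-1}`
all lie in one coset `c + ℤ`; the point with coordinates `w_k - c` off position `i` and `n c` at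
position `i` is an integer vector with coordinate sum zero, and it maps to `w`. -/

open Finset

lemma AlatAmb_subset_AstarAmb (m : ℕ) : AlatAmb m ⊆ AstarAmb m := by
  rintro x ⟨hint, hsum⟩
  refine ⟨hsum, fun j k => ?_⟩
  obtain ⟨a, ha⟩ := hint j
  obtain ⟨b, hb⟩ := hint k
  exact ⟨a - b, by rw [ha, hb]; push_cast; ring⟩

section projT

variable (n : ℕ) (y : EuclideanSpace ℝ (Fin n))

lemma sum_projT : ∑ k, projT n y k = 0 := by
  rcases n.eq_zero_or_pos with rfl | hn
  · simp
  have hn' : (n : ℝ) ≠ 0 := by positivity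
  simp only [projT, sum_sub_distrib, sum_const, card_univ, Fintype.card_fin, nsmul_eq_mul]
  field_simp
  ring

lemma projT_sub_projT (j k : Fin n) : projT n y j - projT n y k = y j - y k := by
  simp only [projT]
  ring

end projT

lemma mapsTo_projT_delCoord_AstarAmb (n : ℕ) (i : Fin (n + 1)) :
    Set.MapsTo (projT n ∘ delCoord n i) (AstarAmb (n + 1)) (AstarAmb n) := by
  rintro x ⟨-, hdiff⟩
  refine ⟨sum_projT n _, fun j k => ?_⟩
  rw [Function.comp_apply, projT_sub_projT]
  exact hdiff (i.succAbove j) (i.succAbove k)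

lemma exists_forall_sub_eq_intCast {ι : Type*} (w : ι → ℝ)
    (h : ∀ j k, ∃ z : ℤ, w j - w k = z) : ∃ c : ℝ, ∀ k, ∃ z : ℤ, w k - c = z := by
  rcases isEmpty_or_nonempty ι with _ | ⟨⟨k₀⟩⟩
  · exact ⟨0, isEmptyElim⟩
  · exact ⟨w k₀, fun k => h k k₀⟩

lemma AstarAmb_subset_image_AlatAmb (n : ℕ) (i : Fin (n + 1)) :
    AstarAmb n ⊆ (projT n ∘ delCoord n i) '' AlatAmb (n + 1) := by
  intro w ⟨hw, hdiff⟩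
  obtain ⟨c, hc⟩ := exists_forall_sub_eq_intCast (fun k => w k) hdiff
  choose m hm using hc
  have hsum : ∑ k, (w k - c) = -(n * c) := by
    rw [sum_sub_distrib, hw, sum_const, card_univ, Fintype.card_fin, nsmul_eq_mul]
    ring
  let x : EuclideanSpace ℝ (Fin (n + 1)) :=
    WithLp.toLp 2 (i.insertNth (n * c) fun k => w k - c)
  have hx_i : x i = n * c := by simp [x]
  have hx_succAbove (k : Fin n) : x (i.succAbove k) = w k - c := by simp [x]
  refine ⟨x, ⟨fun j => ?_, ?_⟩, ?_⟩
  · refine i.succAboveCases ⟨-∑ k, m k, ?_⟩ (fun k => ⟨m k, by rw [hx_succAbove, hm]⟩) j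
    rw [hx_i, ← neg_neg (n * c : ℝ), ← hsum, sum_congr rfl fun k _ => hm k]
    push_cast
    rfl
  · rw [Fin.sum_univ_succAbove _ i, hx_i, sum_congr rfl fun k _ => hx_succAbove k, hsum]
    ring
  · ext k
    have hn : (n : ℝ) ≠ 0 := Nat.cast_ne_zero.mpr k.pos.ne'
    change x (i.succAbove k) - (∑ l, x (i.succAbove l)) / n = w k
    rw [hx_succAbove, sum_congr rfl fun l _ => hx_succAbove l, hsum]
    field_simp
    ring

theorem proj_image_eq_Astar_general (n : ℕ) (i : Fin (n + 1)) :
    (projT n ∘ delCoord n i) '' AlatAmb (n + 1) = AstarAmb n ∧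
    (projT n ∘ delCoord n i) '' AstarAmb (n + 1) = AstarAmb n := by
  have hmaps := mapsTo_projT_delCoord_AstarAmb n i
  have hsurj := AstarAmb_subset_image_AlatAmb n i
  exact ⟨((Set.image_mono (AlatAmb_subset_AstarAmb _)).trans hmaps.image_subset).antisymm hsurj,
    hmaps.image_subset.antisymm (hsurj.trans (Set.image_mono (AlatAmb_subset_AstarAmb _)))⟩

/-- For `n ≥ 2` and any index `i`, the image of `A_n` under `T_n ∘ S^i` equals
`A*_{n-1}`, and likewise the image of `A*_n` under `T_n ∘ S^i` equals `A*_{n-1}`. -/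
theorem proj_image_eq_Astar (n : ℕ) (hn : 2 ≤ n) (i : Fin (n + 1)) :
    (projT n ∘ delCoord n i) '' AlatAmb (n + 1) = AstarAmb n ∧
    (projT n ∘ delCoord n i) '' AstarAmb (n + 1) = AstarAmb n :=
  proj_image_eq_Astar_general n i
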